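/- A matching M in a finite bipartite graph is a maximum matching if and only if there is no M-augmenting path (Berge's theorem). -/

import Mathlib

variable {α β : Type*} [DecidableEq α] [DecidableEq β]

/-- `M` is a matching of the bipartite graph with edge set `E`. -/
def IsMatching (E M : Finset (α × β)) : Prop :=
  M ⊆ E ∧ ∀ e ∈ M, ∀ f ∈ M, (e.1 = f.1 ∨ e.2 = f.2) → e = f

def UnmatchedA (M : Finset (α × β)) (a : α) : Prop := ∀ e ∈ M, e.1 ≠ a

def UnmatchedB (M : Finset (α × β)) (b : β) : Prop := ∀ e ∈ M, e.2 ≠ b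

/-- An `M`-augmenting path `a 0, b 0, a 1, b 1, …, a k, b k`. -/
structure AugPath (E M : Finset (α × β)) (k : ℕ)
    (a : Fin (k + 1) → α) (b : Fin (k + 1) → β) : Prop where
  inj_a : Function.Injective a
  inj_b : Function.Injective b
  unmatched_edges : ∀ i, (a i, b i) ∈ E ∧ (a i, b i) ∉ M
  matched_edges : ∀ i : Fin k, (a i.succ, b i.castSucc) ∈ M
  free_start : UnmatchedA M (a 0)
  free_end : UnmatchedB M (b (Fin.last k))

/-!
An augmenting path `P` turns `M` into the larger matching `M ∆ P`. Conversely, let `M'` be any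
matching and start at an `α`-vertex covered by `M'` but not by `M`; follow its `M'`-edge, then the
`M`-edge at the far end, and so on. Both matchings make this walk deterministic forwards and
backwards, so it never revisits a vertex; as each step uses a new edge of `M`, it must stop. It
cannot stop at a `β`-vertex missed by `M` (that would be an augmenting path), so it stops at an
`α`-vertex covered by `M` but not by `M'`. Distinct starts give distinct ends, so on the `α`-side
`M'` covers no more vertices outside `M` than `M` covers outside `M'`, whence `|M'| ≤ |M|`.
-/

section

open Finset Function

variable {α β : Type*} {E M M' N : Finset (α × β)}

namespace IsMatching

theorem snd_eq_of_mem (hM : IsMatching E M) {a : α} {b₁ b₂ : β} (h₁ : (a, b₁) ∈ M)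
    (h₂ : (a, b₂) ∈ M) : b₁ = b₂ :=
  congrArg Prod.snd (hM.2 _ h₁ _ h₂ (Or.inl rfl))

theorem fst_eq_of_mem (hM : IsMatching E M) {a₁ a₂ : α} {b : β} (h₁ : (a₁, b) ∈ M)
    (h₂ : (a₂, b) ∈ M) : a₁ = a₂ :=
  congrArg Prod.fst (hM.2 _ h₁ _ h₂ (Or.inr rfl))

theorem mono (hM : IsMatching E M) (hNM : N ⊆ M) : IsMatching E N :=
  ⟨hNM.trans hM.1, fun e he f hf => hM.2 e (hNM he) f (hNM hf)⟩

theorem union [DecidableEq (α × β)] (hM : IsMatching E M) (hN : IsMatching E N)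
    (hMN : ∀ e ∈ M, ∀ f ∈ N, e.1 ≠ f.1 ∧ e.2 ≠ f.2) : IsMatching E (M ∪ N) := by
  refine ⟨union_subset hM.1 hN.1, ?_⟩
  intro e he f hf hef
  rcases mem_union.1 he with he | he <;> rcases mem_union.1 hf with hf | hf
  · exact hM.2 e he f hf hef
  · exact absurd hef (not_or.2 (hMN e he f hf))
  · exact absurd (hef.imp Eq.symm Eq.symm) (not_or.2 (hMN f hf e he))
  · exact hN.2 e he f hf hef

theorem card_image_fst [DecidableEq α] (hM : IsMatching E M) : #(M.image Prod.fst) = #M :=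
  card_image_of_injOn fun e he f hf h => hM.2 e he f hf (Or.inl h)

end IsMatching

section Augment

variable [DecidableEq (α × β)] {k : ℕ}

def unmatchedEdges (a : Fin (k + 1) → α) (b : Fin (k + 1) → β) : Finset (α × β) :=
  univ.image fun i => (a i, b i)

def matchedEdges (a : Fin (k + 1) → α) (b : Fin (k + 1) → β) : Finset (α × β) :=
  univ.image fun i : Fin k => (a i.succ, b i.castSucc)

namespace AugPath

variable {a : Fin (k + 1) → α} {b : Fin (k + 1) → β}

theorem matchedEdges_subset (hp : AugPath E M k a b) : matchedEdges a b ⊆ M :=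
  image_subset_iff.2 fun i _ => hp.matched_edges i

theorem disjoint_unmatchedEdges (hp : AugPath E M k a b) : Disjoint M (unmatchedEdges a b) := by
  rw [disjoint_right]
  rintro _ he
  obtain ⟨i, -, rfl⟩ := mem_image.1 he
  exact (hp.unmatched_edges i).2

theorem card_matchedEdges (hp : AugPath E M k a b) : #(matchedEdges a b) = k := by
  rw [matchedEdges, card_image_of_injective _ fun i j h => Fin.succ_injective _ (hp.inj_a
    (congrArg Prod.fst h)), card_univ, Fintype.card_fin]

theorem card_unmatchedEdges (hp : AugPath E M k a b) : #(unmatchedEdges a b) = k + 1 := by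
  rw [unmatchedEdges, card_image_of_injective _ fun i j h => hp.inj_a (congrArg Prod.fst h),
    card_univ, Fintype.card_fin]

theorem isMatching_unmatchedEdges (hp : AugPath E M k a b) :
    IsMatching E (unmatchedEdges a b) := by
  refine ⟨image_subset_iff.2 fun i _ => (hp.unmatched_edges i).1, ?_⟩
  simp only [unmatchedEdges, mem_image, mem_univ, true_and]
  rintro _ ⟨i, rfl⟩ _ ⟨j, rfl⟩ (h | h)
  · rw [hp.inj_a h]
  · rw [hp.inj_b h]

theorem ne_of_mem_sdiff_matchedEdges (hM : IsMatching E M) (hp : AugPath E M k a b) {e : α × β}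
    (he : e ∈ M \ matchedEdges a b) (j : Fin (k + 1)) : e.1 ≠ a j ∧ e.2 ≠ b j := by
  obtain ⟨heM, he⟩ := mem_sdiff.1 he
  have hmatched (i : Fin k) (hi : e = (a i.succ, b i.castSucc)) : False :=
    he (mem_image.2 ⟨i, mem_univ i, hi.symm⟩)
  constructor
  · intro h
    cases j using Fin.cases with
    | zero => exact hp.free_start e heM h
    | succ i => exact hmatched i (hM.2 _ heM _ (hp.matched_edges i) (Or.inl h))
  · intro h
    cases j using Fin.lastCases with
    | last => exact hp.free_end e heM h
    | cast i => exact hmatched i (hM.2 _ heM _ (hp.matched_edges i) (Or.inr h))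

theorem isMatching_augment (hM : IsMatching E M) (hp : AugPath E M k a b) :
    IsMatching E (M \ matchedEdges a b ∪ unmatchedEdges a b) := by
  refine (hM.mono sdiff_subset).union hp.isMatching_unmatchedEdges fun e he _ hf => ?_
  obtain ⟨j, -, rfl⟩ := mem_image.1 hf
  exact hp.ne_of_mem_sdiff_matchedEdges hM he j

theorem card_augment (hp : AugPath E M k a b) :
    #(M \ matchedEdges a b ∪ unmatchedEdges a b) = #M + 1 := by
  have hk : k ≤ #M := hp.card_matchedEdges ▸ card_le_card hp.matchedEdges_subset
  rw [card_union_of_disjoint (hp.disjoint_unmatchedEdges.mono_left sdiff_subset),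
    card_sdiff_of_subset hp.matchedEdges_subset, hp.card_matchedEdges, hp.card_unmatchedEdges]
  omega

end AugPath

end Augment

/-- The walk `a 0, b 0, a 1, b 1, …, a n` goes from `a i` to `b i` along `M'` and back to
`a (i + 1)` along `M`; the values of `a` beyond `n` and of `b` from `n` on play no role. -/
structure IsAlternatingWalk (M M' : Finset (α × β)) (n : ℕ) (a : ℕ → α) (b : ℕ → β) :
    Prop where
  forward_mem : ∀ i < n, (a i, b i) ∈ M'
  backward_mem : ∀ i < n, (a (i + 1), b i) ∈ M

namespace IsAlternatingWalk

variable {n n' : ℕ} {a a' : ℕ → α} {b b' : ℕ → β}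

theorem extend (hw : IsAlternatingWalk M M' n a b) {x : α} {y : β} (hy : (a n, y) ∈ M')
    (hx : (x, y) ∈ M) : IsAlternatingWalk M M' (n + 1) (update a (n + 1) x) (update b n y) := by
  constructor <;> intro i hi <;> rcases Nat.lt_succ_iff_lt_or_eq.1 hi with hi | rfl
  · rw [update_of_ne (by omega), update_of_ne (by omega)]
    exact hw.forward_mem i hi
  · rwa [update_of_ne (by omega), update_self]
  · rw [update_of_ne (by omega), update_of_ne (by omega)]
    exact hw.backward_mem i hi
  · rwa [update_self, update_self]

theorem update_right (hw : IsAlternatingWalk M M' n a b) (y : β) :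
    IsAlternatingWalk M M' n a (update b n y) where
  forward_mem i hi := by rw [update_of_ne hi.ne]; exact hw.forward_mem i hi
  backward_mem i hi := by rw [update_of_ne hi.ne]; exact hw.backward_mem i hi

theorem eq_of_succ_eq (hM : IsMatching E M) (hM' : IsMatching E M')
    (hw : IsAlternatingWalk M M' n a b) (hw' : IsAlternatingWalk M M' n' a' b') {i j : ℕ}
    (hi : i < n) (hj : j < n') (h : a (i + 1) = a' (j + 1)) : a i = a' j := by
  have hb : b i = b' j := hM.snd_eq_of_mem (hw.backward_mem i hi) (h ▸ hw'.backward_mem j hj)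
  exact hM'.fst_eq_of_mem (hw.forward_mem i hi) (hb ▸ hw'.forward_mem j hj)

theorem eq_of_apply_eq (hM : IsMatching E M) (hM' : IsMatching E M')
    (hw : IsAlternatingWalk M M' n a b) (hw' : IsAlternatingWalk M M' n' a' b')
    (hs : UnmatchedA M (a 0)) (hs' : UnmatchedA M (a' 0)) {i j : ℕ} (hi : i ≤ n) (hj : j ≤ n')
    (h : a i = a' j) : i = j ∧ a 0 = a' 0 := by
  induction i generalizing j with
  | zero =>
    cases j with
    | zero => exact ⟨rfl, h⟩
    | succ j => exact absurd h.symm (hs _ (hw'.backward_mem j hj))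
  | succ i ih =>
    cases j with
    | zero => exact absurd h (hs' _ (hw.backward_mem i hi))
    | succ j =>
      obtain ⟨rfl, h0⟩ := ih (by omega) (by omega) (hw.eq_of_succ_eq hM hM' hw' hi hj h)
      exact ⟨rfl, h0⟩

theorem injOn (hM : IsMatching E M) (hM' : IsMatching E M') (hw : IsAlternatingWalk M M' n a b)
    (hs : UnmatchedA M (a 0)) : Set.InjOn a (Set.Iic n) :=
  fun _ hi _ hj h => (hw.eq_of_apply_eq hM hM' hw hs hs hi hj h).1

theorem length_le_card (hM : IsMatching E M) (hM' : IsMatching E M')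
    (hw : IsAlternatingWalk M M' n a b) (hs : UnmatchedA M (a 0)) : n ≤ #M := by
  have hinj : Set.InjOn (fun i => (a (i + 1), b i)) (range n) := fun i hi j hj h => by
    have := hw.injOn hM hM' hs (Set.mem_Iic.2 (mem_range.1 hi)) (Set.mem_Iic.2 (mem_range.1 hj))
      (congrArg Prod.fst h)
    omega
  simpa using card_le_card_of_injOn _ (fun i hi => hw.backward_mem i (mem_range.1 hi)) hinj

theorem augPath (hM : IsMatching E M) (hM' : IsMatching E M') (hw : IsAlternatingWalk M M' n a b)
    (hs : UnmatchedA M (a 0)) (hn : (a n, b n) ∈ M') (hfree : UnmatchedB M (b n)) :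
    AugPath E M n (fun i => a i) (fun i => b i) := by
  have hinj := hw.injOn hM hM' hs
  have hforward (i : ℕ) (hi : i ≤ n) : (a i, b i) ∈ M' :=
    hi.lt_or_eq.elim (hw.forward_mem i) fun h => h ▸ hn
  have hnot_mem (i : ℕ) (hi : i ≤ n) : (a i, b i) ∉ M := by
    rcases i with _ | i
    · exact fun h => hs _ h rfl
    · intro h
      have hb : b i = b (i + 1) := hM.snd_eq_of_mem (hw.backward_mem i hi) h
      have := hinj (Set.mem_Iic.2 (by omega)) (Set.mem_Iic.2 hi)
        (hM'.fst_eq_of_mem (hw.forward_mem i hi) (hb ▸ hforward (i + 1) hi))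
      omega
  refine ⟨fun i j h => Fin.ext (hinj i.is_le j.is_le h),
    fun i j h => Fin.ext (hinj i.is_le j.is_le ?_),
    fun i => ⟨hM'.1 (hforward i i.is_le), hnot_mem i i.is_le⟩,
    fun i => hw.backward_mem i i.2, hs, hfree⟩
  exact hM'.fst_eq_of_mem (hforward i i.is_le) (h ▸ hforward j j.is_le)

end IsAlternatingWalk

theorem unmatchedA_iff_notMem_image_fst [DecidableEq α] {x : α} :
    UnmatchedA M x ↔ x ∉ M.image Prod.fst :=
  ⟨fun h hx => let ⟨e, he, hex⟩ := mem_image.1 hx; h e he hex,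
    fun h e he hex => h (mem_image.2 ⟨e, he, hex⟩)⟩

theorem IsAlternatingWalk.exists_extension_forall_notMem (hM : IsMatching E M)
    (hM' : IsMatching E M')
    (noaug : ¬ ∃ (k : ℕ) (a : Fin (k + 1) → α) (b : Fin (k + 1) → β), AugPath E M k a b)
    {n : ℕ} {a : ℕ → α} {b : ℕ → β} (hw : IsAlternatingWalk M M' n a b)
    (hs : UnmatchedA M (a 0)) :
    ∃ m a' b', a' 0 = a 0 ∧ IsAlternatingWalk M M' m a' b' ∧ ∀ y, (a' m, y) ∉ M' := by
  by_contra! hstuck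
  have hlong (m : ℕ) : ∃ a' b', a' 0 = a 0 ∧ IsAlternatingWalk M M' (n + m) a' b' := by
    induction m with
    | zero => exact ⟨a, b, rfl, hw⟩
    | succ m ih =>
      obtain ⟨a', b', ha0, hw'⟩ := ih
      obtain ⟨y, hy⟩ := hstuck _ a' b' ha0 hw'
      by_cases hfree : UnmatchedB M y
      · refine absurd ⟨n + m, _, _,
          (hw'.update_right y).augPath hM hM' (ha0 ▸ hs) ?_ ?_⟩ noaug <;> rwa [update_self]
      · simp only [UnmatchedB, not_forall, not_not] at hfree
        obtain ⟨⟨x, _⟩, hx, rfl⟩ := hfree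
        exact ⟨_, _, by rwa [update_of_ne (by omega)], hw'.extend hy hx⟩
  obtain ⟨a', b', ha0, hw'⟩ := hlong (#M + 1)
  have := hw'.length_le_card hM hM' (ha0 ▸ hs)
  omega

theorem exists_isAlternatingWalk_mem_sdiff [DecidableEq α] (hM : IsMatching E M)
    (hM' : IsMatching E M')
    (noaug : ¬ ∃ (k : ℕ) (a : Fin (k + 1) → α) (b : Fin (k + 1) → β), AugPath E M k a b)
    {s : α} (hs : s ∈ M'.image Prod.fst \ M.image Prod.fst) :
    ∃ n a b, a 0 = s ∧ IsAlternatingWalk M M' n a b ∧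
      a n ∈ M.image Prod.fst \ M'.image Prod.fst := by
  obtain ⟨hs', hs⟩ := mem_sdiff.1 hs
  obtain ⟨⟨s, t⟩, hst, rfl⟩ := mem_image.1 hs'
  have hw₀ : IsAlternatingWalk M M' 0 (fun _ => s) (fun _ => t) := ⟨nofun, nofun⟩
  obtain ⟨n, a, b, ha0, hw, hend⟩ := hw₀.exists_extension_forall_notMem hM hM' noaug
    (unmatchedA_iff_notMem_image_fst.2 hs)
  refine ⟨n, a, b, ha0, hw, ?_⟩
  cases n with
  | zero => exact absurd (ha0 ▸ hst) (hend t)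
  | succ n =>
    exact mem_sdiff.2 ⟨mem_image.2 ⟨_, hw.backward_mem n n.lt_succ_self, rfl⟩,
      unmatchedA_iff_notMem_image_fst.1 fun e he h => hend e.2 (h ▸ he)⟩

theorem card_le_card_of_not_exists_augPath [DecidableEq α] (hM : IsMatching E M)
    (hM' : IsMatching E M')
    (noaug : ¬ ∃ (k : ℕ) (a : Fin (k + 1) → α) (b : Fin (k + 1) → β), AugPath E M k a b) :
    #M' ≤ #M := by
  set A := M.image Prod.fst
  set A' := M'.image Prod.fst
  have hend (s : α) (hs : s ∈ A' \ A) : ∃ t ∈ A \ A', ∃ n a b,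
      a 0 = s ∧ IsAlternatingWalk M M' n a b ∧ a n = t :=
    let ⟨n, a, b, ha0, hw, ht⟩ := exists_isAlternatingWalk_mem_sdiff hM hM' noaug hs
    ⟨a n, ht, n, a, b, ha0, hw, rfl⟩
  choose! f hfT hf using hend
  have hST : #(A' \ A) ≤ #(A \ A') := by
    refine card_le_card_of_injOn f hfT fun s₁ hs₁ s₂ hs₂ h => ?_
    obtain ⟨n₁, a₁, b₁, rfl, hw₁, he₁⟩ := hf s₁ hs₁
    obtain ⟨n₂, a₂, b₂, rfl, hw₂, he₂⟩ := hf s₂ hs₂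
    exact (hw₁.eq_of_apply_eq hM hM' hw₂
      (unmatchedA_iff_notMem_image_fst.2 (mem_sdiff.1 hs₁).2)
      (unmatchedA_iff_notMem_image_fst.2 (mem_sdiff.1 hs₂).2) le_rfl le_rfl
      (he₁.trans (h.trans he₂.symm))).2
  calc #M' = #(A' \ A) + #(A' ∩ A) := by
        rw [card_sdiff_add_card_inter, hM'.card_image_fst]
    _ ≤ #(A \ A') + #(A ∩ A') := by rw [inter_comm]; omega
    _ = #M := by rw [card_sdiff_add_card_inter, hM.card_image_fst]

end

theorem berge_maximum_iff_no_augmenting_path_general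
    (E M : Finset (α × β)) (hM : IsMatching E M) :
    (∀ M', IsMatching E M' → M'.card ≤ M.card) ↔
      ¬ ∃ (k : ℕ) (a : Fin (k + 1) → α) (b : Fin (k + 1) → β),
          AugPath E M k a b := by
  constructor
  · rintro hmax ⟨k, a, b, hp⟩
    have := hmax _ (hp.isMatching_augment hM)
    rw [hp.card_augment] at this
    omega
  · exact fun noaug M' hM' => card_le_card_of_not_exists_augPath hM hM' noaug

/-- Berge's theorem: a matching `M` in a finite bipartite graph is a maximum
matching if and only if there exists no `M`-augmenting path. -/
theorem berge_maximum_iff_no_augmenting_path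
    [Fintype α] [Fintype β]
    (E M : Finset (α × β)) (hM : IsMatching E M) :
    (∀ M', IsMatching E M' → M'.card ≤ M.card) ↔
      ¬ ∃ (k : ℕ) (a : Fin (k + 1) → α) (b : Fin (k + 1) → β),
          AugPath E M k a b :=
  berge_maximum_iff_no_augmenting_path_general E M hM
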